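/- arXiv:2303.02662 — 6 statements merged into one kernel-verified Lean document; each statement's English description precedes it below -/
import Mathlib

section
/- For a bipartite quantum state ρ_AB with marginals ρ_A = tr_B(ρ_AB) and ρ_B = tr_A(ρ_AB), one has tr(ρ_A²) + tr(ρ_B²) ≤ 1 + tr(ρ_AB²). -/
open Matrix BigOperators
open scoped ComplexOrder

/-- Partial trace over the second factor. -/
noncomputable def trB {m n : Type*} [Fintype m] [Fintype n]
    (ρ : Matrix (m × n) (m × n) ℂ) : Matrix m m ℂ :=
  fun a a' => ∑ b : n, ρ (a, b) (a', b)

/-- Partial trace over the first factor. -/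
noncomputable def trA {m n : Type*} [Fintype m] [Fintype n]
    (ρ : Matrix (m × n) (m × n) ℂ) : Matrix n n ℂ :=
  fun b b' => ∑ a : m, ρ (a, b) (a, b')

namespace PuritySub

open scoped Kronecker

variable {K L : Type*} [Fintype K] [DecidableEq K] [Fintype L] [DecidableEq L]

/-- 0/1 matrix of the map `f`. -/
noncomputable def swapMat (f : K → K) : Matrix K K ℂ :=
  Matrix.of fun x y => if x = f y then 1 else 0

lemma swapMat_mul (f g : K → K) : swapMat f * swapMat g = swapMat (f ∘ g) := by
  ext x y
  simp [swapMat, Matrix.mul_apply, Finset.sum_ite_eq]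

omit [Fintype K] in
lemma swapMat_id : swapMat (id : K → K) = 1 := by
  ext x y
  simp [swapMat, Matrix.one_apply, eq_comm]

omit [Fintype K] in
lemma swapMat_conjTranspose (f : K → K) (hf : Function.Involutive f) :
    (swapMat f)ᴴ = swapMat f := by
  ext x y
  simp only [swapMat, conjTranspose_apply, Matrix.of_apply]
  have : (y = f x) ↔ (x = f y) := by
    constructor <;> intro h <;> simp [h, hf x, hf y]
  simp only [this]
  split <;> simp

lemma trace_mul_swapMat (M : Matrix K K ℂ) (f : K → K) :
    (M * swapMat f).trace = ∑ x, M x (f x) := by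
  simp [Matrix.trace, Matrix.diag, Matrix.mul_apply, swapMat, eq_comm, Finset.sum_ite_eq]

lemma trace_nonneg_of_psd (M : Matrix K K ℂ) (h : M.PosSemidef) : 0 ≤ M.trace := by
  exact h.trace_nonneg

omit [Fintype K] [DecidableEq K] [Fintype L] [DecidableEq L] in
lemma kron_conjTranspose (A : Matrix K K ℂ) (B : Matrix L L ℂ) :
    (A ⊗ₖ B)ᴴ = Aᴴ ⊗ₖ Bᴴ := by
  ext x y
  simp [conjTranspose_apply, star_mul']

lemma kron_psd {A : Matrix K K ℂ} {B : Matrix L L ℂ}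
    (hA : A.PosSemidef) (hB : B.PosSemidef) : (A ⊗ₖ B).PosSemidef := by
  exact hA.kronecker hB

lemma sum_comm3 {α β γ M : Type*} [AddCommMonoid M] [Fintype α] [Fintype β] [Fintype γ]
    (f : α → β → γ → M) :
    ∑ a, ∑ b, ∑ c, f a b c = ∑ c, ∑ a, ∑ b, f a b c := by
  have h1 : ∀ a, ∑ b, ∑ c, f a b c = ∑ c, ∑ b, f a b c := fun a => Finset.sum_comm
  simp_rw [h1]
  exact Finset.sum_comm

end PuritySub

open PuritySub
open scoped Kronecker

/-- For a bipartite quantum state ρ_AB with marginals ρ_A = tr_B(ρ_AB) and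
ρ_B = tr_A(ρ_AB), one has tr(ρ_A²) + tr(ρ_B²) ≤ 1 + tr(ρ_AB²). -/
theorem purity_subadditivity (dA dB : ℕ)
    (ρ : Matrix (Fin dA × Fin dB) (Fin dA × Fin dB) ℂ)
    (hρ : ρ.PosSemidef) (htr : ρ.trace = 1) :
    (trB ρ * trB ρ).trace.re + (trA ρ * trA ρ).trace.re
      ≤ 1 + (ρ * ρ).trace.re := by
  classical
  set σ : Matrix ((Fin dA × Fin dB) × (Fin dA × Fin dB)) ((Fin dA × Fin dB) × (Fin dA × Fin dB)) ℂ := ρ ⊗ₖ ρ with hσ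
  have hσpsd : σ.PosSemidef := kron_psd hρ hρ
  -- the two partial swaps
  set fA : ((Fin dA × Fin dB) × (Fin dA × Fin dB)) → ((Fin dA × Fin dB) × (Fin dA × Fin dB)) := fun x => ((x.2.1, x.1.2), (x.1.1, x.2.2)) with hfA
  set fB : ((Fin dA × Fin dB) × (Fin dA × Fin dB)) → ((Fin dA × Fin dB) × (Fin dA × Fin dB)) := fun x => ((x.1.1, x.2.2), (x.2.1, x.1.2)) with hfB
  have hfAi : Function.Involutive fA := fun x => rfl
  have hfBi : Function.Involutive fB := fun x => rfl
  set SA : Matrix ((Fin dA × Fin dB) × (Fin dA × Fin dB)) ((Fin dA × Fin dB) × (Fin dA × Fin dB)) ℂ := swapMat fA with hSA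
  set SB : Matrix ((Fin dA × Fin dB) × (Fin dA × Fin dB)) ((Fin dA × Fin dB) × (Fin dA × Fin dB)) ℂ := swapMat fB with hSB
  have hSA2 : SA * SA = 1 := by
    rw [hSA, swapMat_mul]
    have : fA ∘ fA = id := funext fun x => rfl
    rw [this, swapMat_id]
  have hSB2 : SB * SB = 1 := by
    rw [hSB, swapMat_mul]
    have : fB ∘ fB = id := funext fun x => rfl
    rw [this, swapMat_id]
  have hcomm : SA * SB = SB * SA := by
    rw [hSA, hSB, swapMat_mul, swapMat_mul]
    congr 1
  set A : Matrix ((Fin dA × Fin dB) × (Fin dA × Fin dB)) ((Fin dA × Fin dB) × (Fin dA × Fin dB)) ℂ := 1 - SA with hA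
  set B : Matrix ((Fin dA × Fin dB) × (Fin dA × Fin dB)) ((Fin dA × Fin dB) × (Fin dA × Fin dB)) ℂ := 1 - SB with hB
  have hA2 : A * A = A + A := by
    rw [hA, sub_mul, one_mul, mul_sub, mul_one, hSA2]; abel
  have hB2 : B * B = B + B := by
    rw [hB, sub_mul, one_mul, mul_sub, mul_one, hSB2]; abel
  have hABc : A * B = B * A := by
    rw [hA, hB, sub_mul, one_mul, mul_sub, mul_one, sub_mul, one_mul, mul_sub, mul_one, hcomm]
    abel
  set M : Matrix ((Fin dA × Fin dB) × (Fin dA × Fin dB)) ((Fin dA × Fin dB) × (Fin dA × Fin dB)) ℂ := A * B with hM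
  have hAH : Aᴴ = A := by
    rw [hA, conjTranspose_sub, conjTranspose_one, hSA, swapMat_conjTranspose _ hfAi]
  have hBH : Bᴴ = B := by
    rw [hB, conjTranspose_sub, conjTranspose_one, hSB, swapMat_conjTranspose _ hfBi]
  have hMH : Mᴴ = B * A := by rw [hM, conjTranspose_mul, hAH, hBH]
  have hMMH : M * Mᴴ = M + M + M + M := by
    rw [hMH, hM]
    calc A * B * (B * A) = A * (B * B) * A := by noncomm_ring
    _ = A * B * A + A * B * A := by rw [hB2]; noncomm_ring
    _ = A * A * B + A * A * B := by rw [mul_assoc, ← hABc, ← mul_assoc]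
    _ = A * B + A * B + (A * B + A * B) := by rw [hA2]; noncomm_ring
    _ = A * B + A * B + A * B + A * B := by abel
  have h0 : 0 ≤ (Mᴴ * σ * M).trace := trace_nonneg_of_psd _ (hσpsd.conjTranspose_mul_mul_same M)
  have h1 : (Mᴴ * σ * M).trace = 4 * (σ * M).trace := by
    rw [trace_mul_cycle, trace_mul_comm, hMMH, mul_add, mul_add, mul_add,
      trace_add, trace_add, trace_add]
    ring
  have hMval : M = 1 - SA - SB + SA * SB := by
    rw [hM, hA, hB]; noncomm_ring
  have h2 : (σ * M).trace
      = σ.trace - (σ * SA).trace - (σ * SB).trace + (σ * (SA * SB)).trace := by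
    rw [hMval, mul_add, mul_sub, mul_sub, mul_one, trace_add, trace_sub, trace_sub]
  have tσ : σ.trace = 1 := by
    rw [hσ, Matrix.trace_kronecker, htr, mul_one]
  have tS : (σ * (SA * SB)).trace = (ρ * ρ).trace := by
    rw [hSA, hSB, swapMat_mul, trace_mul_swapMat]
    rw [Fintype.sum_prod_type]
    simp only [Matrix.trace, Matrix.diag, Matrix.mul_apply, hσ, Matrix.kroneckerMap_apply,
      Function.comp, hfA, hfB]
  have tA2 : (σ * SA).trace = (trB ρ * trB ρ).trace := by
    rw [hSA, trace_mul_swapMat]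
    simp only [hσ, Matrix.kroneckerMap_apply, hfA]
    simp only [Fintype.sum_prod_type]
    simp only [Matrix.trace, Matrix.diag, Matrix.mul_apply, trB, Finset.sum_mul_sum]
    refine Finset.sum_congr rfl fun a _ => ?_
    exact Finset.sum_comm
  have tB2 : (σ * SB).trace = (trA ρ * trA ρ).trace := by
    rw [hSB, trace_mul_swapMat]
    simp only [hσ, Matrix.kroneckerMap_apply, hfB]
    simp only [Fintype.sum_prod_type]
    simp only [Matrix.trace, Matrix.diag, Matrix.mul_apply, trA, Finset.sum_mul_sum]
    rw [Finset.sum_comm]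
    refine Finset.sum_congr rfl fun b _ => ?_
    exact sum_comm3 _
  have hfinal : (0:ℂ) ≤ 4 * ((1:ℂ) - (trB ρ * trB ρ).trace - (trA ρ * trA ρ).trace
      + (ρ * ρ).trace) := by
    rw [← tσ, ← tA2, ← tB2, ← tS, ← h2, ← h1]
    exact h0
  have hre := (Complex.le_def.mp hfinal).1
  simp only [Complex.zero_re, Complex.mul_re, Complex.add_re, Complex.sub_re, Complex.one_re,
    Complex.add_im, Complex.sub_im, Complex.one_im, Complex.mul_im] at hre
  norm_num at hre
  linarith
end

section
/- Let V: H_X → H_A ⊗ H_B be an isometry with marginal channels E = tr_B ∘ V(·)V† and Ē = tr_A ∘ V(·)V†, and define u(E) + u(Ē) = (d_X/(d_X+1))·(tr[E(I/d_X)²] + tr[Ē(I/d_X)²]). Then d_X/(d_X+1) · (1/d_A + 1/d_B) ≤ u(E) + u(Ē) ≤ 1. -/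
open Matrix BigOperators

/-- The image of the maximally mixed state under the isometric channel ρ ↦ VρV†. -/
noncomputable def isoMM (dX dA dB : ℕ) (V : Matrix (Fin dA × Fin dB) (Fin dX) ℂ) :
    Matrix (Fin dA × Fin dB) (Fin dA × Fin dB) ℂ :=
  V * ((dX : ℂ)⁻¹ • (1 : Matrix (Fin dX) (Fin dX) ℂ)) * Vᴴ


open Finset Complex

open Finset Complex

local notation "conj'" => starRingEnd ℂ

private lemma rot3 {α β γ : Type*} [Fintype α] [Fintype β] [Fintype γ] (F : α → β → γ → ℂ) :
    ∑ x, ∑ y, ∑ c, F x y c = ∑ c, ∑ x, ∑ y, F x y c :=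
  (Finset.sum_congr rfl fun _ _ => Finset.sum_comm).trans Finset.sum_comm

private lemma mul_sum_sum {β γ : Type*} [Fintype β] [Fintype γ] (F G : β → γ → ℂ) :
    (∑ b, ∑ x, F b x) * (∑ b, ∑ x, G b x) = ∑ b, ∑ b', ∑ x, ∑ y, F b x * G b' y := by
  rw [Finset.sum_mul_sum]
  exact Finset.sum_congr rfl fun b _ => Finset.sum_congr rfl fun b' _ =>
    Finset.sum_mul_sum _ _ _ _

private lemma fact6 {A B X : Type*} [Fintype A] [Fintype B] [Fintype X] (F G : A → B → X → ℂ) :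
    ∑ a, ∑ a', ∑ b, ∑ b', ∑ x, ∑ y, F a b x * G a' b' y
      = (∑ a, ∑ b, ∑ x, F a b x) * (∑ a, ∑ b, ∑ x, G a b x) := by
  rw [Finset.sum_mul_sum]
  exact Finset.sum_congr rfl fun a _ => Finset.sum_congr rfl fun a' _ =>
    (mul_sum_sum (F a) (G a')).symm

private lemma factA {A B X : Type*} [Fintype A] [Fintype B] [Fintype X] (F G : A → A → B → X → ℂ) :
    ∑ a, ∑ a', ∑ b, ∑ b', ∑ x, ∑ y, F a a' b x * G a a' b' y
      = ∑ a, ∑ a', (∑ b, ∑ x, F a a' b x) * (∑ b, ∑ x, G a a' b x) :=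
  Finset.sum_congr rfl fun a _ => Finset.sum_congr rfl fun a' _ => (mul_sum_sum _ _).symm

private lemma factB {A B X : Type*} [Fintype A] [Fintype B] [Fintype X] (F G : B → B → A → X → ℂ) :
    ∑ a : A, ∑ a' : A, ∑ b, ∑ b', ∑ x : X, ∑ y : X, F b b' a x * G b b' a' y
      = ∑ b, ∑ b', (∑ a, ∑ x, F b b' a x) * (∑ a, ∑ x, G b b' a x) := by
  calc ∑ a : A, ∑ a' : A, ∑ b, ∑ b', ∑ x : X, ∑ y : X, F b b' a x * G b b' a' y
      = ∑ b, ∑ a : A, ∑ a' : A, ∑ b', ∑ x : X, ∑ y : X, F b b' a x * G b b' a' y := rot3 _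
    _ = ∑ b, ∑ b', ∑ a : A, ∑ a' : A, ∑ x : X, ∑ y : X, F b b' a x * G b b' a' y :=
        Finset.sum_congr rfl fun b _ => rot3 _
    _ = _ := Finset.sum_congr rfl fun b _ => Finset.sum_congr rfl fun b' _ =>
        (mul_sum_sum _ _).symm

private lemma factX {A B X : Type*} [Fintype A] [Fintype B] [Fintype X] (F G : X → X → A → B → ℂ) :
    ∑ a, ∑ a', ∑ b, ∑ b', ∑ x, ∑ y, F x y a b * G x y a' b'
      = ∑ x, ∑ y, (∑ a, ∑ b, F x y a b) * (∑ a, ∑ b, G x y a b) := by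
  calc ∑ a, ∑ a', ∑ b, ∑ b', ∑ x, ∑ y, F x y a b * G x y a' b'
      = ∑ a, ∑ a', ∑ x, ∑ b, ∑ b', ∑ y, F x y a b * G x y a' b' :=
        Finset.sum_congr rfl fun a _ => Finset.sum_congr rfl fun a' _ => rot3 _
    _ = ∑ x, ∑ a, ∑ a', ∑ b, ∑ b', ∑ y, F x y a b * G x y a' b' := rot3 _
    _ = ∑ x, ∑ a, ∑ a', ∑ y, ∑ b, ∑ b', F x y a b * G x y a' b' :=
        Finset.sum_congr rfl fun x _ => Finset.sum_congr rfl fun a _ =>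
          Finset.sum_congr rfl fun a' _ => rot3 _
    _ = ∑ x, ∑ y, ∑ a, ∑ a', ∑ b, ∑ b', F x y a b * G x y a' b' :=
        Finset.sum_congr rfl fun x _ => rot3 _
    _ = _ := Finset.sum_congr rfl fun x _ => Finset.sum_congr rfl fun y _ =>
        (mul_sum_sum _ _).symm

private lemma swap_at0 {α : Type*} [Fintype α] (F : α → α → ℂ) :
    ∑ a, ∑ a', F a a' = ∑ a, ∑ a', F a' a := Finset.sum_comm

private lemma swap_at2 {α β γ : Type*} [Fintype α] [Fintype β] [Fintype γ]
    (F : α → β → γ → γ → ℂ) :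
    ∑ a, ∑ a', ∑ b, ∑ b', F a a' b b' = ∑ a, ∑ a', ∑ b, ∑ b', F a a' b' b :=
  Finset.sum_congr rfl fun _ _ => Finset.sum_congr rfl fun _ _ => Finset.sum_comm

private lemma swap_at4 {α β γ : Type*} [Fintype α] [Fintype β] [Fintype γ]
    (F : α → α → β → β → γ → γ → ℂ) :
    ∑ a, ∑ a', ∑ b, ∑ b', ∑ x, ∑ y, F a a' b b' x y
      = ∑ a, ∑ a', ∑ b, ∑ b', ∑ x, ∑ y, F a a' b b' y x :=
  Finset.sum_congr rfl fun _ _ => Finset.sum_congr rfl fun _ _ =>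
    Finset.sum_congr rfl fun _ _ => Finset.sum_congr rfl fun _ _ => Finset.sum_comm

private lemma aux_lower {d n : ℕ} (M : Fin d → Fin d → ℂ) (htr : ∑ a, M a a = (n : ℂ)) :
    (n : ℝ)^2 ≤ d * ∑ a, ∑ a', Complex.normSq (M a a') := by
  have h1 : ∑ a, (M a a).re = (n : ℝ) := by
    have := congrArg Complex.re htr
    simpa [Complex.re_sum] using this
  have hcs : (∑ a, (M a a).re)^2 ≤ (d : ℝ) * ∑ a, ((M a a).re)^2 := by
    have := Finset.sum_mul_sq_le_sq_mul_sq Finset.univ (fun _ : Fin d => (1:ℝ))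
      (fun a => (M a a).re)
    simpa [Finset.card_univ] using this
  have h2 : ∑ a, ((M a a).re)^2 ≤ ∑ a, ∑ a', Complex.normSq (M a a') := by
    refine le_trans (Finset.sum_le_sum fun a _ => ?_)
      (Finset.sum_le_sum fun a _ =>
        Finset.single_le_sum (f := fun a' => Complex.normSq (M a a'))
          (fun a' _ => Complex.normSq_nonneg _) (Finset.mem_univ a))
    show (M a a).re ^ 2 ≤ Complex.normSq (M a a)
    rw [Complex.normSq_apply]; nlinarith [sq_nonneg (M a a).im]
  calc (n:ℝ)^2 = (∑ a, (M a a).re)^2 := by rw [h1]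
    _ ≤ (d:ℝ) * ∑ a, ((M a a).re)^2 := hcs
    _ ≤ (d:ℝ) * ∑ a, ∑ a', Complex.normSq (M a a') :=
        mul_le_mul_of_nonneg_left h2 (by positivity)


private lemma sum6_add {A B X : Type*} [Fintype A] [Fintype B] [Fintype X]
    (F G : A → A → B → B → X → X → ℂ) :
    (∑ a, ∑ a', ∑ b, ∑ b', ∑ x, ∑ y, (F a a' b b' x y + G a a' b b' x y))
      = (∑ a, ∑ a', ∑ b, ∑ b', ∑ x, ∑ y, F a a' b b' x y)
        + (∑ a, ∑ a', ∑ b, ∑ b', ∑ x, ∑ y, G a a' b b' x y) := by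
  simp only [Finset.sum_add_distrib]

private lemma sum6_sub {A B X : Type*} [Fintype A] [Fintype B] [Fintype X]
    (F G : A → A → B → B → X → X → ℂ) :
    (∑ a, ∑ a', ∑ b, ∑ b', ∑ x, ∑ y, (F a a' b b' x y - G a a' b b' x y))
      = (∑ a, ∑ a', ∑ b, ∑ b', ∑ x, ∑ y, F a a' b b' x y)
        - (∑ a, ∑ a', ∑ b, ∑ b', ∑ x, ∑ y, G a a' b b' x y) := by
  simp only [Finset.sum_sub_distrib]

set_option maxHeartbeats 2000000 in
private lemma aux_upper {dA dB dX : ℕ} (f : Fin dA → Fin dB → Fin dX → ℂ)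
    (MA : Fin dA → Fin dA → ℂ) (MB : Fin dB → Fin dB → ℂ)
    (hMA : ∀ a a', MA a a' = ∑ b, ∑ x, f a b x * conj' (f a' b x))
    (hMB : ∀ b b', MB b b' = ∑ a, ∑ x, f a b x * conj' (f a b' x))
    (hgram : ∀ x y, (∑ a, ∑ b, f a b x * conj' (f a b y)) = if x = y then 1 else 0) :
    (∑ a, ∑ a', Complex.normSq (MA a a')) + (∑ b, ∑ b', Complex.normSq (MB b b'))
      ≤ (dX : ℝ)^2 + dX := by
  have hn : ∑ a, ∑ b, ∑ x, f a b x * conj' (f a b x) = (dX:ℂ) := by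
    rw [rot3 (fun a b x => f a b x * conj' (f a b x))]
    have h1 : ∀ x : Fin dX, ∑ a, ∑ b, f a b x * conj' (f a b x) = 1 := fun x => by
      simpa using hgram x x
    simp [h1]
  -- the sixteen grouped sums
  have hT11 : ∑ a, ∑ a', ∑ b, ∑ b', ∑ x, ∑ y,
      (f a b x * conj' (f a b x)) * (f a' b' y * conj' (f a' b' y)) = (dX:ℂ) * dX := by
    refine (fact6 (fun a b x => f a b x * conj' (f a b x))
      (fun a b x => f a b x * conj' (f a b x))).trans ?_
    rw [hn]
  have hT22 : ∑ a, ∑ a', ∑ b, ∑ b', ∑ x, ∑ y,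
      (f a' b x * conj' (f a' b x)) * (f a b' y * conj' (f a b' y)) = (dX:ℂ) * dX :=
    (swap_at0 _).trans hT11
  have hT33 : ∑ a, ∑ a', ∑ b, ∑ b', ∑ x, ∑ y,
      (f a b' x * conj' (f a b' x)) * (f a' b y * conj' (f a' b y)) = (dX:ℂ) * dX :=
    (swap_at2 _).trans hT11
  have hT44 : ∑ a, ∑ a', ∑ b, ∑ b', ∑ x, ∑ y,
      (f a' b' x * conj' (f a' b' x)) * (f a b y * conj' (f a b y)) = (dX:ℂ) * dX :=
    (swap_at0 _).trans hT33
  have hT14 : ∑ a, ∑ a', ∑ b, ∑ b', ∑ x, ∑ y,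
      (f a b x * conj' (f a b y)) * (f a' b' y * conj' (f a' b' x)) = (dX:ℂ) := by
    refine (factX (fun x y a b => f a b x * conj' (f a b y))
      (fun x y a b => f a b y * conj' (f a b x))).trans ?_
    have h2 : ∀ x y : Fin dX,
        (∑ a, ∑ b, f a b x * conj' (f a b y)) * (∑ a, ∑ b, f a b y * conj' (f a b x))
          = (if x = y then (1:ℂ) else 0) := by
      intro x y; rw [hgram x y, hgram y x]; by_cases h : x = y <;> simp [h]
    calc ∑ x, ∑ y,
        (∑ a, ∑ b, f a b x * conj' (f a b y)) * (∑ a, ∑ b, f a b y * conj' (f a b x))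
        = ∑ x, ∑ y, (if x = y then (1:ℂ) else 0) :=
          Finset.sum_congr rfl fun x _ => Finset.sum_congr rfl fun y _ => h2 x y
      _ = (dX:ℂ) := by simp
  have hT41 : ∑ a, ∑ a', ∑ b, ∑ b', ∑ x, ∑ y,
      (f a b y * conj' (f a b x)) * (f a' b' x * conj' (f a' b' y)) = (dX:ℂ) := by
    refine (factX (fun x y a b => f a b y * conj' (f a b x))
      (fun x y a b => f a b x * conj' (f a b y))).trans ?_
    have h2 : ∀ x y : Fin dX,
        (∑ a, ∑ b, f a b y * conj' (f a b x)) * (∑ a, ∑ b, f a b x * conj' (f a b y))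
          = (if x = y then (1:ℂ) else 0) := by
      intro x y; rw [hgram y x, hgram x y]; by_cases h : x = y <;> simp [h]
    calc ∑ x, ∑ y,
        (∑ a, ∑ b, f a b y * conj' (f a b x)) * (∑ a, ∑ b, f a b x * conj' (f a b y))
        = ∑ x, ∑ y, (if x = y then (1:ℂ) else 0) :=
          Finset.sum_congr rfl fun x _ => Finset.sum_congr rfl fun y _ => h2 x y
      _ = (dX:ℂ) := by simp
  have hT23 : ∑ a, ∑ a', ∑ b, ∑ b', ∑ x, ∑ y,
      (f a' b x * conj' (f a' b y)) * (f a b' y * conj' (f a b' x)) = (dX:ℂ) :=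
    (swap_at0 _).trans hT14
  have hT32 : ∑ a, ∑ a', ∑ b, ∑ b', ∑ x, ∑ y,
      (f a' b y * conj' (f a' b x)) * (f a b' x * conj' (f a b' y)) = (dX:ℂ) :=
    (swap_at0 _).trans hT41
  have hT12 : ∑ a, ∑ a', ∑ b, ∑ b', ∑ x, ∑ y,
      (f a b x * conj' (f a' b x)) * (f a' b' y * conj' (f a b' y))
        = ∑ a, ∑ a', MA a a' * MA a' a := by
    refine (factA (fun a a' b x => f a b x * conj' (f a' b x))
      (fun a a' b x => f a' b x * conj' (f a b x))).trans ?_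
    exact Finset.sum_congr rfl fun a _ => Finset.sum_congr rfl fun a' _ => by
      rw [← hMA a a', ← hMA a' a]
  have hT21 : ∑ a, ∑ a', ∑ b, ∑ b', ∑ x, ∑ y,
      (f a' b x * conj' (f a b x)) * (f a b' y * conj' (f a' b' y))
        = ∑ a, ∑ a', MA a a' * MA a' a := by
    refine (factA (fun a a' b x => f a' b x * conj' (f a b x))
      (fun a a' b x => f a b x * conj' (f a' b x))).trans ?_
    exact Finset.sum_congr rfl fun a _ => Finset.sum_congr rfl fun a' _ => by
      rw [← hMA a' a, ← hMA a a']; ring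
  have hT34 : ∑ a, ∑ a', ∑ b, ∑ b', ∑ x, ∑ y,
      (f a' b y * conj' (f a b y)) * (f a b' x * conj' (f a' b' x))
        = ∑ a, ∑ a', MA a a' * MA a' a :=
    (swap_at4 _).trans hT21
  have hT43 : ∑ a, ∑ a', ∑ b, ∑ b', ∑ x, ∑ y,
      (f a b y * conj' (f a' b y)) * (f a' b' x * conj' (f a b' x))
        = ∑ a, ∑ a', MA a a' * MA a' a :=
    (swap_at4 _).trans hT12
  have hT13 : ∑ a, ∑ a', ∑ b, ∑ b', ∑ x, ∑ y,
      (f a b x * conj' (f a b' x)) * (f a' b' y * conj' (f a' b y))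
        = ∑ b, ∑ b', MB b b' * MB b' b := by
    refine (factB (fun b b' a x => f a b x * conj' (f a b' x))
      (fun b b' a x => f a b' x * conj' (f a b x))).trans ?_
    exact Finset.sum_congr rfl fun b _ => Finset.sum_congr rfl fun b' _ => by
      rw [← hMB b b', ← hMB b' b]
  have hT31 : ∑ a, ∑ a', ∑ b, ∑ b', ∑ x, ∑ y,
      (f a b' x * conj' (f a b x)) * (f a' b y * conj' (f a' b' y))
        = ∑ b, ∑ b', MB b b' * MB b' b := by
    refine (factB (fun b b' a x => f a b' x * conj' (f a b x))
      (fun b b' a x => f a b x * conj' (f a b' x))).trans ?_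
    exact Finset.sum_congr rfl fun b _ => Finset.sum_congr rfl fun b' _ => by
      rw [← hMB b' b, ← hMB b b']; ring
  have hT24 : ∑ a, ∑ a', ∑ b, ∑ b', ∑ x, ∑ y,
      (f a' b x * conj' (f a' b' x)) * (f a b' y * conj' (f a b y))
        = ∑ b, ∑ b', MB b b' * MB b' b :=
    (swap_at0 _).trans hT13
  have hT42 : ∑ a, ∑ a', ∑ b, ∑ b', ∑ x, ∑ y,
      (f a' b' x * conj' (f a' b x)) * (f a b y * conj' (f a b' y))
        = ∑ b, ∑ b', MB b b' * MB b' b :=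
    (swap_at0 _).trans hT31
  -- the key identity
  have hkey : ∑ a, ∑ a', ∑ b, ∑ b', ∑ x, ∑ y,
      (f a b x * f a' b' y - f a' b x * f a b' y - f a b' x * f a' b y + f a' b' x * f a b y)
        * conj' (f a b x * f a' b' y - f a' b x * f a b' y - f a b' x * f a' b y
            + f a' b' x * f a b y)
      = 4*((dX:ℂ)*dX) + 4*(dX:ℂ) - 4*(∑ a, ∑ a', MA a a' * MA a' a)
          - 4*(∑ b, ∑ b', MB b b' * MB b' b) := by
    have hpoint : ∀ (a a' : Fin dA) (b b' : Fin dB) (x y : Fin dX),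
        (f a b x * f a' b' y - f a' b x * f a b' y - f a b' x * f a' b y + f a' b' x * f a b y)
          * conj' (f a b x * f a' b' y - f a' b x * f a b' y - f a b' x * f a' b y
              + f a' b' x * f a b y)
        = (f a b x * conj' (f a b x)) * (f a' b' y * conj' (f a' b' y))
          + (f a' b x * conj' (f a' b x)) * (f a b' y * conj' (f a b' y))
          + (f a b' x * conj' (f a b' x)) * (f a' b y * conj' (f a' b y))
          + (f a' b' x * conj' (f a' b' x)) * (f a b y * conj' (f a b y))
          + (f a b x * conj' (f a b y)) * (f a' b' y * conj' (f a' b' x))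
          + (f a b y * conj' (f a b x)) * (f a' b' x * conj' (f a' b' y))
          + (f a' b x * conj' (f a' b y)) * (f a b' y * conj' (f a b' x))
          + (f a' b y * conj' (f a' b x)) * (f a b' x * conj' (f a b' y))
          - (f a b x * conj' (f a' b x)) * (f a' b' y * conj' (f a b' y))
          - (f a' b x * conj' (f a b x)) * (f a b' y * conj' (f a' b' y))
          - (f a' b y * conj' (f a b y)) * (f a b' x * conj' (f a' b' x))
          - (f a b y * conj' (f a' b y)) * (f a' b' x * conj' (f a b' x))
          - (f a b x * conj' (f a b' x)) * (f a' b' y * conj' (f a' b y))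
          - (f a b' x * conj' (f a b x)) * (f a' b y * conj' (f a' b' y))
          - (f a' b x * conj' (f a' b' x)) * (f a b' y * conj' (f a b y))
          - (f a' b' x * conj' (f a' b x)) * (f a b y * conj' (f a b' y)) := by
      intros; simp only [map_add, map_sub, _root_.map_mul]; ring
    calc ∑ a, ∑ a', ∑ b, ∑ b', ∑ x, ∑ y,
        (f a b x * f a' b' y - f a' b x * f a b' y - f a b' x * f a' b y + f a' b' x * f a b y)
          * conj' (f a b x * f a' b' y - f a' b x * f a b' y - f a b' x * f a' b y
              + f a' b' x * f a b y)
        = ∑ a, ∑ a', ∑ b, ∑ b', ∑ x, ∑ y,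
          ((f a b x * conj' (f a b x)) * (f a' b' y * conj' (f a' b' y))
          + (f a' b x * conj' (f a' b x)) * (f a b' y * conj' (f a b' y))
          + (f a b' x * conj' (f a b' x)) * (f a' b y * conj' (f a' b y))
          + (f a' b' x * conj' (f a' b' x)) * (f a b y * conj' (f a b y))
          + (f a b x * conj' (f a b y)) * (f a' b' y * conj' (f a' b' x))
          + (f a b y * conj' (f a b x)) * (f a' b' x * conj' (f a' b' y))
          + (f a' b x * conj' (f a' b y)) * (f a b' y * conj' (f a b' x))
          + (f a' b y * conj' (f a' b x)) * (f a b' x * conj' (f a b' y))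
          - (f a b x * conj' (f a' b x)) * (f a' b' y * conj' (f a b' y))
          - (f a' b x * conj' (f a b x)) * (f a b' y * conj' (f a' b' y))
          - (f a' b y * conj' (f a b y)) * (f a b' x * conj' (f a' b' x))
          - (f a b y * conj' (f a' b y)) * (f a' b' x * conj' (f a b' x))
          - (f a b x * conj' (f a b' x)) * (f a' b' y * conj' (f a' b y))
          - (f a b' x * conj' (f a b x)) * (f a' b y * conj' (f a' b' y))
          - (f a' b x * conj' (f a' b' x)) * (f a b' y * conj' (f a b y))
          - (f a' b' x * conj' (f a' b x)) * (f a b y * conj' (f a b' y))) :=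
          Finset.sum_congr rfl fun a _ => Finset.sum_congr rfl fun a' _ =>
            Finset.sum_congr rfl fun b _ => Finset.sum_congr rfl fun b' _ =>
              Finset.sum_congr rfl fun x _ => Finset.sum_congr rfl fun y _ =>
                hpoint a a' b b' x y
      _ = 4*((dX:ℂ)*dX) + 4*(dX:ℂ) - 4*(∑ a, ∑ a', MA a a' * MA a' a)
            - 4*(∑ b, ∑ b', MB b b' * MB b' b) := by
          rw [sum6_sub, sum6_sub, sum6_sub, sum6_sub, sum6_sub, sum6_sub, sum6_sub, sum6_sub,
            sum6_add, sum6_add, sum6_add, sum6_add, sum6_add, sum6_add, sum6_add]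
          rw [hT11, hT22, hT33, hT44, hT14, hT41, hT23, hT32, hT12, hT21, hT34, hT43,
            hT13, hT31, hT24, hT42]
          ring
  -- conversion to real
  have hMAc : ∀ a a', MA a' a = conj' (MA a a') := by
    intro a a'
    rw [hMA, hMA, map_sum]
    refine Finset.sum_congr rfl fun b _ => ?_
    rw [map_sum]
    refine Finset.sum_congr rfl fun x _ => ?_
    simp [mul_comm]
  have hMBc : ∀ b b', MB b' b = conj' (MB b b') := by
    intro b b'
    rw [hMB, hMB, map_sum]
    refine Finset.sum_congr rfl fun a _ => ?_
    rw [map_sum]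
    refine Finset.sum_congr rfl fun x _ => ?_
    simp [mul_comm]
  have hSAc : ∑ a, ∑ a', MA a a' * MA a' a
      = (((∑ a, ∑ a', Complex.normSq (MA a a')) : ℝ) : ℂ) := by
    push_cast
    refine Finset.sum_congr rfl fun a _ => Finset.sum_congr rfl fun a' _ => ?_
    rw [hMAc a a', Complex.mul_conj]
  have hSBc : ∑ b, ∑ b', MB b b' * MB b' b
      = (((∑ b, ∑ b', Complex.normSq (MB b b')) : ℝ) : ℂ) := by
    push_cast
    refine Finset.sum_congr rfl fun b _ => Finset.sum_congr rfl fun b' _ => ?_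
    rw [hMBc b b', Complex.mul_conj]
  have hZC : ∑ a, ∑ a', ∑ b, ∑ b', ∑ x, ∑ y,
      (f a b x * f a' b' y - f a' b x * f a b' y - f a b' x * f a' b y + f a' b' x * f a b y)
        * conj' (f a b x * f a' b' y - f a' b x * f a b' y - f a b' x * f a' b y
            + f a' b' x * f a b y)
      = (((∑ a, ∑ a', ∑ b, ∑ b', ∑ x, ∑ y, Complex.normSq
          (f a b x * f a' b' y - f a' b x * f a b' y - f a b' x * f a' b y
            + f a' b' x * f a b y)) : ℝ) : ℂ) := by
    push_cast
    exact Finset.sum_congr rfl fun a _ => Finset.sum_congr rfl fun a' _ =>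
      Finset.sum_congr rfl fun b _ => Finset.sum_congr rfl fun b' _ =>
        Finset.sum_congr rfl fun x _ => Finset.sum_congr rfl fun y _ =>
          (Complex.mul_conj _)
  have hpos : (0:ℝ) ≤ ∑ a, ∑ a', ∑ b, ∑ b', ∑ x, ∑ y, Complex.normSq
      (f a b x * f a' b' y - f a' b x * f a b' y - f a b' x * f a' b y + f a' b' x * f a b y) := by
    refine Finset.sum_nonneg fun _ _ => Finset.sum_nonneg fun _ _ =>
      Finset.sum_nonneg fun _ _ => Finset.sum_nonneg fun _ _ =>
        Finset.sum_nonneg fun _ _ => Finset.sum_nonneg fun _ _ => Complex.normSq_nonneg _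
  have hreal : (∑ a, ∑ a', ∑ b, ∑ b', ∑ x, ∑ y, Complex.normSq
      (f a b x * f a' b' y - f a' b x * f a b' y - f a b' x * f a' b y + f a' b' x * f a b y))
      = 4*((dX:ℝ)*dX) + 4*(dX:ℝ) - 4*(∑ a, ∑ a', Complex.normSq (MA a a'))
          - 4*(∑ b, ∑ b', Complex.normSq (MB b b')) := by
    have h := hkey
    rw [hZC, hSAc, hSBc] at h
    exact_mod_cast h
  nlinarith [hpos, hreal, sq_nonneg ((dX:ℝ))]


set_option maxHeartbeats 1000000 in
/-- For an isometry V : H_X → H_A ⊗ H_B with marginal channels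
E = tr_B ∘ V(·)V† and Ē = tr_A ∘ V(·)V†, and
u(E) + u(Ē) = (d_X/(d_X+1))·(tr[E(I/d_X)²] + tr[Ē(I/d_X)²]), one has
d_X/(d_X+1) · (1/d_A + 1/d_B) ≤ u(E) + u(Ē) ≤ 1. -/
theorem cup_set_band_bound (dX dA dB : ℕ)
    (hX : 0 < dX) (hA : 0 < dA) (hB : 0 < dB) (hdim : dX ≤ dA * dB)
    (V : Matrix (Fin dA × Fin dB) (Fin dX) ℂ) (hV : Vᴴ * V = 1) :
    (dX : ℝ) / (dX + 1) * (1 / (dA : ℝ) + 1 / (dB : ℝ))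
      ≤ (dX : ℝ) / (dX + 1) *
          ((trB (isoMM dX dA dB V) * trB (isoMM dX dA dB V)).trace.re
            + (trA (isoMM dX dA dB V) * trA (isoMM dX dA dB V)).trace.re)
    ∧ (dX : ℝ) / (dX + 1) *
          ((trB (isoMM dX dA dB V) * trB (isoMM dX dA dB V)).trace.re
            + (trA (isoMM dX dA dB V) * trA (isoMM dX dA dB V)).trace.re) ≤ 1 := by
  have hiso : isoMM dX dA dB V = (dX:ℂ)⁻¹ • (V * Vᴴ) := by
    unfold isoMM
    rw [Matrix.mul_smul, Matrix.mul_one, Matrix.smul_mul]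
  have hgram : ∀ x y : Fin dX,
      (∑ a, ∑ b, V (a,b) x * conj' (V (a,b) y)) = if x = y then 1 else 0 := by
    intro x y
    have h0 : (Vᴴ * V) y x = (1 : Matrix (Fin dX) (Fin dX) ℂ) y x := by rw [hV]
    rw [Matrix.mul_apply, Matrix.one_apply] at h0
    have h1 : ∑ p : Fin dA × Fin dB, V p x * conj' (V p y) = if x = y then 1 else 0 := by
      calc ∑ p : Fin dA × Fin dB, V p x * conj' (V p y)
          = ∑ p : Fin dA × Fin dB, Vᴴ y p * V p x := by
            refine Finset.sum_congr rfl fun p _ => ?_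
            rw [Matrix.conjTranspose_apply, ← starRingEnd_apply]
            ring
        _ = if y = x then 1 else 0 := h0
        _ = if x = y then 1 else 0 := by
            by_cases h : x = y
            · simp [h]
            · have h' : ¬ y = x := fun e => h e.symm
              simp [h, h']
    calc ∑ a, ∑ b, V (a,b) x * conj' (V (a,b) y)
        = ∑ p : Fin dA × Fin dB, V p x * conj' (V p y) :=
          (Fintype.sum_prod_type (f := fun p : Fin dA × Fin dB => V p x * conj' (V p y))).symm
      _ = _ := h1
  have htrB : ∀ a a', trB (isoMM dX dA dB V) a a'
      = (dX:ℂ)⁻¹ * ∑ b, ∑ x, V (a,b) x * conj' (V (a',b) x) := by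
    intro a a'
    show ∑ b, isoMM dX dA dB V (a,b) (a',b) = _
    rw [hiso, Finset.mul_sum]
    refine Finset.sum_congr rfl fun b _ => ?_
    rw [Matrix.smul_apply, Matrix.mul_apply, smul_eq_mul]
    refine congrArg (HMul.hMul _) (Finset.sum_congr rfl fun x _ => ?_)
    rw [Matrix.conjTranspose_apply, ← starRingEnd_apply]
  have htrA : ∀ b b', trA (isoMM dX dA dB V) b b'
      = (dX:ℂ)⁻¹ * ∑ a, ∑ x, V (a,b) x * conj' (V (a,b') x) := by
    intro b b'
    show ∑ a, isoMM dX dA dB V (a,b) (a,b') = _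
    rw [hiso, Finset.mul_sum]
    refine Finset.sum_congr rfl fun a _ => ?_
    rw [Matrix.smul_apply, Matrix.mul_apply, smul_eq_mul]
    refine congrArg (HMul.hMul _) (Finset.sum_congr rfl fun x _ => ?_)
    rw [Matrix.conjTranspose_apply, ← starRingEnd_apply]
  -- trace of square of trB
  have hMAc : ∀ a a' : Fin dA, (∑ b, ∑ x, V (a',b) x * conj' (V (a,b) x))
      = conj' (∑ b, ∑ x, V (a,b) x * conj' (V (a',b) x)) := by
    intro a a'
    rw [map_sum]
    refine Finset.sum_congr rfl fun b _ => ?_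
    rw [map_sum]
    refine Finset.sum_congr rfl fun x _ => ?_
    simp [mul_comm]
  have hMBc : ∀ b b' : Fin dB, (∑ a, ∑ x, V (a,b') x * conj' (V (a,b) x))
      = conj' (∑ a, ∑ x, V (a,b) x * conj' (V (a,b') x)) := by
    intro b b'
    rw [map_sum]
    refine Finset.sum_congr rfl fun a _ => ?_
    rw [map_sum]
    refine Finset.sum_congr rfl fun x _ => ?_
    simp [mul_comm]
  have htrace1 : ((trB (isoMM dX dA dB V) * trB (isoMM dX dA dB V)).trace).re
      = ((dX:ℝ)⁻¹)^2 * ∑ a, ∑ a', Complex.normSq (∑ b, ∑ x, V (a,b) x * conj' (V (a',b) x)) := by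
    have h3 : (trB (isoMM dX dA dB V) * trB (isoMM dX dA dB V)).trace
        = ((((dX:ℝ)⁻¹)^2 * ∑ a, ∑ a', Complex.normSq
            (∑ b, ∑ x, V (a,b) x * conj' (V (a',b) x)) : ℝ) : ℂ) := by
      calc (trB (isoMM dX dA dB V) * trB (isoMM dX dA dB V)).trace
          = ∑ a, ∑ a', trB (isoMM dX dA dB V) a a' * trB (isoMM dX dA dB V) a' a := by
            simp only [Matrix.trace, Matrix.diag, Matrix.mul_apply]
        _ = ∑ a, ∑ a', ((dX:ℂ)⁻¹)^2 * ((Complex.normSq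
              (∑ b, ∑ x, V (a,b) x * conj' (V (a',b) x)) : ℝ) : ℂ) := by
            refine Finset.sum_congr rfl fun a _ => Finset.sum_congr rfl fun a' _ => ?_
            rw [htrB a a', htrB a' a, hMAc a a']
            rw [show ∀ c z : ℂ, (c * z) * (c * conj' z) = c^2 * (z * conj' z) from
              fun c z => by ring]
            rw [Complex.mul_conj]
        _ = _ := by
            simp only [← Finset.mul_sum]
            push_cast
            ring
    rw [h3, Complex.ofReal_re]
  have htrace2 : ((trA (isoMM dX dA dB V) * trA (isoMM dX dA dB V)).trace).re
      = ((dX:ℝ)⁻¹)^2 * ∑ b, ∑ b', Complex.normSq (∑ a, ∑ x, V (a,b) x * conj' (V (a,b') x)) := by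
    have h3 : (trA (isoMM dX dA dB V) * trA (isoMM dX dA dB V)).trace
        = ((((dX:ℝ)⁻¹)^2 * ∑ b, ∑ b', Complex.normSq
            (∑ a, ∑ x, V (a,b) x * conj' (V (a,b') x)) : ℝ) : ℂ) := by
      calc (trA (isoMM dX dA dB V) * trA (isoMM dX dA dB V)).trace
          = ∑ b, ∑ b', trA (isoMM dX dA dB V) b b' * trA (isoMM dX dA dB V) b' b := by
            simp only [Matrix.trace, Matrix.diag, Matrix.mul_apply]
        _ = ∑ b, ∑ b', ((dX:ℂ)⁻¹)^2 * ((Complex.normSq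
              (∑ a, ∑ x, V (a,b) x * conj' (V (a,b') x)) : ℝ) : ℂ) := by
            refine Finset.sum_congr rfl fun b _ => Finset.sum_congr rfl fun b' _ => ?_
            rw [htrA b b', htrA b' b, hMBc b b']
            rw [show ∀ c z : ℂ, (c * z) * (c * conj' z) = c^2 * (z * conj' z) from
              fun c z => by ring]
            rw [Complex.mul_conj]
        _ = _ := by
            simp only [← Finset.mul_sum]
            push_cast
            ring
    rw [h3, Complex.ofReal_re]
  -- diagonal trace facts
  have htrMA : ∑ a, ∑ b, ∑ x, V (a,b) x * conj' (V (a,b) x) = (dX:ℂ) := by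
    rw [rot3 (fun a b x => V (a,b) x * conj' (V (a,b) x))]
    have h1 : ∀ x : Fin dX, ∑ a, ∑ b, V (a,b) x * conj' (V (a,b) x) = 1 := fun x => by
      simpa using hgram x x
    simp [h1]
  have htrMB : ∑ b, ∑ a, ∑ x, V (a,b) x * conj' (V (a,b) x) = (dX:ℂ) :=
    Finset.sum_comm.trans htrMA
  -- the three bounds
  have hL1 := aux_lower (n := dX)
    (fun a a' => ∑ b, ∑ x, V (a,b) x * conj' (V (a',b) x)) htrMA
  have hL2 := aux_lower (n := dX)
    (fun b b' => ∑ a, ∑ x, V (a,b) x * conj' (V (a,b') x)) htrMB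
  have hU := aux_upper (fun a b x => V (a,b) x)
    (fun a a' => ∑ b, ∑ x, V (a,b) x * conj' (V (a',b) x))
    (fun b b' => ∑ a, ∑ x, V (a,b) x * conj' (V (a,b') x))
    (fun _ _ => rfl) (fun _ _ => rfl) hgram
  rw [htrace1, htrace2]
  set SA := ∑ a, ∑ a', Complex.normSq (∑ b, ∑ x, V (a,b) x * conj' (V (a',b) x)) with hSAdef
  set SB := ∑ b, ∑ b', Complex.normSq (∑ a, ∑ x, V (a,b) x * conj' (V (a,b') x)) with hSBdef
  have hdX : (1:ℝ) ≤ dX := by exact_mod_cast hX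
  have hdA : (1:ℝ) ≤ dA := by exact_mod_cast hA
  have hdB : (1:ℝ) ≤ dB := by exact_mod_cast hB
  have hdX0 : (0:ℝ) < dX := by linarith
  have hdA0 : (0:ℝ) < dA := by linarith
  have hdB0 : (0:ℝ) < dB := by linarith
  constructor
  · refine mul_le_mul_of_nonneg_left ?_ (by positivity)
    have hSA' : (dX:ℝ)^2 / dA ≤ SA := by
      rw [div_le_iff₀ hdA0]
      linarith [hL1, mul_comm (dA:ℝ) SA]
    have hSB' : (dX:ℝ)^2 / dB ≤ SB := by
      rw [div_le_iff₀ hdB0]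
      linarith [hL2, mul_comm (dB:ℝ) SB]
    have e1 : (1:ℝ)/dA ≤ ((dX:ℝ)⁻¹)^2 * SA := by
      calc (1:ℝ)/dA = ((dX:ℝ)⁻¹)^2 * ((dX:ℝ)^2/dA) := by field_simp
        _ ≤ ((dX:ℝ)⁻¹)^2 * SA := mul_le_mul_of_nonneg_left hSA' (by positivity)
    have e2 : (1:ℝ)/dB ≤ ((dX:ℝ)⁻¹)^2 * SB := by
      calc (1:ℝ)/dB = ((dX:ℝ)⁻¹)^2 * ((dX:ℝ)^2/dB) := by field_simp
        _ ≤ ((dX:ℝ)⁻¹)^2 * SB := mul_le_mul_of_nonneg_left hSB' (by positivity)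
    linarith
  · have key : ((dX:ℝ)⁻¹)^2 * SA + ((dX:ℝ)⁻¹)^2 * SB ≤ ((dX:ℝ)+1)/dX := by
      calc ((dX:ℝ)⁻¹)^2 * SA + ((dX:ℝ)⁻¹)^2 * SB = ((dX:ℝ)⁻¹)^2 * (SA + SB) := by ring
        _ ≤ ((dX:ℝ)⁻¹)^2 * ((dX:ℝ)^2 + dX) := mul_le_mul_of_nonneg_left hU (by positivity)
        _ = ((dX:ℝ)+1)/dX := by
            field_simp
    calc (dX:ℝ)/(dX+1) * (((dX:ℝ)⁻¹)^2 * SA + ((dX:ℝ)⁻¹)^2 * SB)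
        ≤ (dX:ℝ)/(dX+1) * (((dX:ℝ)+1)/dX) := mul_le_mul_of_nonneg_left key (by positivity)
      _ = 1 := by
          field_simp
end

section
/- Define the marginal channels of V_α(ρ) = U^α (ρ ⊗ |0⟩⟨0|) (U^α)† where U = SWAP on two qubits and U^α = ((1+e^{iπα})/2)·I + ((1−e^{iπα})/2)·U. Then with s = sin²(πα/2), the unitarities of the marginals E_α = tr_B ∘ V_α and Ē_α = tr_A ∘ V_α are u(E_α) = (1−s)(3−s)/3 and u(Ē_α) = 1 − (1−s)(3+s)/3. -/
open Matrix BigOperators Kronecker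

/-- The traceless Paulis X, Y, Z. -/
noncomputable def PauliT : Fin 3 → Matrix (Fin 2) (Fin 2) ℂ
  | 0 => !![0, 1; 1, 0]
  | 1 => !![0, -Complex.I; Complex.I, 0]
  | 2 => !![1, 0; 0, -1]

/-- The unitarity u(F) = (1/3) tr(T_F† T_F) of a single-qubit channel F, where
(T_F)_{jk} = (1/2) tr(P_j F(P_k)) over the traceless Paulis. -/
noncomputable def uQ (F : Matrix (Fin 2) (Fin 2) ℂ → Matrix (Fin 2) (Fin 2) ℂ) : ℝ :=
  (1 / 3) * ∑ j : Fin 3, ∑ k : Fin 3,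
    Complex.normSq ((2 : ℂ)⁻¹ * (PauliT j * F (PauliT k)).trace)

/-- The SWAP unitary on two qubits. -/
noncomputable def SWAPmat : Matrix (Fin 2 × Fin 2) (Fin 2 × Fin 2) ℂ :=
  fun p q => if p.1 = q.2 ∧ p.2 = q.1 then 1 else 0

/-- The fractional SWAP, U^α = ((1+e^{iπα})/2)·I + ((1−e^{iπα})/2)·SWAP (up to global phase). -/
noncomputable def SWAPpow (α : ℝ) : Matrix (Fin 2 × Fin 2) (Fin 2 × Fin 2) ℂ :=
  ((1 + Complex.exp (Complex.I * Real.pi * α)) / 2) • (1 : Matrix (Fin 2 × Fin 2) (Fin 2 × Fin 2) ℂ)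
    + ((1 - Complex.exp (Complex.I * Real.pi * α)) / 2) • SWAPmat


set_option maxHeartbeats 1000000 in
/-- For the isometry V_α(ρ) = SWAP^α (ρ ⊗ |0⟩⟨0|) (SWAP^α)†, with
s = sin²(πα/2), the marginal unitarities are u(E_α) = (1−s)(3−s)/3 and
u(Ē_α) = 1 − (1−s)(3+s)/3. -/
theorem swap_alpha_marginal_unitarities (α : ℝ) (h0 : 0 ≤ α) (h1 : α ≤ 1) :
    uQ (fun ρ => trB (SWAPpow α * (ρ ⊗ₖ !![(1 : ℂ), 0; 0, 0]) * (SWAPpow α)ᴴ))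
      = (1 - Real.sin (Real.pi * α / 2) ^ 2) * (3 - Real.sin (Real.pi * α / 2) ^ 2) / 3 ∧
    uQ (fun ρ => trA (SWAPpow α * (ρ ⊗ₖ !![(1 : ℂ), 0; 0, 0]) * (SWAPpow α)ᴴ))
      = 1 - (1 - Real.sin (Real.pi * α / 2) ^ 2) * (3 + Real.sin (Real.pi * α / 2) ^ 2) / 3 := by
  have hexp : Complex.exp (Complex.I * Real.pi * α)
      = (Real.cos (Real.pi * α) : ℂ) + (Real.sin (Real.pi * α) : ℂ) * Complex.I := by
    rw [show Complex.I * (Real.pi : ℂ) * (α : ℂ) = ((Real.pi * α : ℝ) : ℂ) * Complex.I by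
      push_cast; ring, Complex.exp_mul_I, ← Complex.ofReal_cos, ← Complex.ofReal_sin]
  have hs : Real.sin (Real.pi * α / 2) ^ 2 = (1 - Real.cos (Real.pi * α)) / 2 := by
    have h := Real.cos_two_mul (Real.pi * α / 2)
    have h2 := Real.sin_sq_add_cos_sq (Real.pi * α / 2)
    rw [show 2 * (Real.pi * α / 2) = Real.pi * α by ring] at h
    nlinarith
  have hpy := Real.sin_sq_add_cos_sq (Real.pi * α)
  rw [hs]
  set c := Real.cos (Real.pi * α) with hc
  set sn := Real.sin (Real.pi * α) with hsn
  constructor <;>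
  · simp [uQ, SWAPpow, trB, trA, SWAPmat, PauliT, Matrix.trace, Matrix.mul_apply,
      Fintype.sum_prod_type, Fin.sum_univ_two, Fin.sum_univ_three, Matrix.one_apply,
      Prod.ext_iff, Matrix.diag, hexp, Complex.conj_ofReal]
    simp only [Complex.normSq_apply, Complex.add_re, Complex.add_im, Complex.mul_re,
      Complex.mul_im, Complex.sub_re, Complex.sub_im, Complex.I_re, Complex.I_im,
      Complex.ofReal_re, Complex.ofReal_im, Complex.one_re, Complex.one_im, Complex.neg_re,
      Complex.neg_im, Complex.div_re, Complex.div_im, Complex.inv_re, Complex.inv_im,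
      Complex.re_ofNat, Complex.im_ofNat, Complex.normSq_ofNat, Complex.zero_re, Complex.zero_im]
    linear_combination (1/6 : ℝ) * hpy
end

section
/- For the partial SWAP family of complementary qubit channels, the unitarities satisfy u(E_α) + u(Ē_α) = 1 − 2s(1−s)/3 where s = sin²(πα/2); consequently, along this family, ū = 3 + u − 2√(1 + 3u) where u = u(E_α) and ū = u(Ē_α). -/
open Matrix BigOperators Kronecker

/-- Auxiliary: the partial swap with e^{iπα} replaced by x + y i. -/
noncomputable def Upw (x y : ℝ) : Matrix (Fin 2 × Fin 2) (Fin 2 × Fin 2) ℂ :=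
  ((1 + ((x:ℂ) + (y:ℂ)*Complex.I)) / 2) • (1 : Matrix (Fin 2 × Fin 2) (Fin 2 × Fin 2) ℂ)
    + ((1 - ((x:ℂ) + (y:ℂ)*Complex.I)) / 2) • SWAPmat

set_option maxHeartbeats 2000000 in
lemma uQ_trB (x y : ℝ) (h : x^2 + y^2 = 1) :
    uQ (fun ρ => trB (Upw x y * (ρ ⊗ₖ !![(1 : ℂ), 0; 0, 0]) * (Upw x y)ᴴ)) = (1+x)*(5+x)/12 := by
  simp only [uQ, trB, Upw, SWAPmat, PauliT, Matrix.trace, Matrix.diag, Matrix.mul_apply,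
    Matrix.kroneckerMap_apply, Matrix.conjTranspose_apply, Matrix.add_apply, Matrix.smul_apply,
    Matrix.one_apply, Fintype.sum_prod_type, Fin.sum_univ_three, Fin.sum_univ_two,
    smul_eq_mul, Fin.isValue, Matrix.cons_val', Matrix.cons_val_zero, Matrix.cons_val_one,
    Matrix.head_cons, Matrix.head_fin_const, Matrix.empty_val', Matrix.cons_val_fin_one,
    Prod.mk.injEq, star_mul', star_div₀, star_one, star_add, star_sub, Complex.star_def,
    map_add, map_sub, _root_.map_one, Complex.conj_ofReal, Complex.conj_I, mul_ite, ite_mul,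
    mul_zero, zero_mul, mul_one, one_mul, if_true, if_false]
  norm_num [map_ofNat, Complex.normSq_apply, Complex.add_re, Complex.add_im, Complex.sub_re,
    Complex.sub_im, Complex.mul_re, Complex.mul_im, Complex.neg_re, Complex.neg_im,
    Complex.I_re, Complex.I_im, Complex.ofReal_re, Complex.ofReal_im,
    Complex.inv_re, Complex.inv_im, Complex.normSq_ofNat,
    Complex.ofReal_ofNat, Complex.re_ofNat, Complex.im_ofNat]
  ring_nf
  nlinarith [h, sq_nonneg x, sq_nonneg y]

set_option maxHeartbeats 2000000 in
lemma uQ_trA (x y : ℝ) (h : x^2 + y^2 = 1) :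
    uQ (fun ρ => trA (Upw x y * (ρ ⊗ₖ !![(1 : ℂ), 0; 0, 0]) * (Upw x y)ᴴ)) = (1-x)*(5-x)/12 := by
  simp only [uQ, trA, Upw, SWAPmat, PauliT, Matrix.trace, Matrix.diag, Matrix.mul_apply,
    Matrix.kroneckerMap_apply, Matrix.conjTranspose_apply, Matrix.add_apply, Matrix.smul_apply,
    Matrix.one_apply, Fintype.sum_prod_type, Fin.sum_univ_three, Fin.sum_univ_two,
    smul_eq_mul, Fin.isValue, Matrix.cons_val', Matrix.cons_val_zero, Matrix.cons_val_one,
    Matrix.head_cons, Matrix.head_fin_const, Matrix.empty_val', Matrix.cons_val_fin_one,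
    Prod.mk.injEq, star_mul', star_div₀, star_one, star_add, star_sub, Complex.star_def,
    map_add, map_sub, _root_.map_one, Complex.conj_ofReal, Complex.conj_I, mul_ite, ite_mul,
    mul_zero, zero_mul, mul_one, one_mul, if_true, if_false]
  norm_num [map_ofNat, Complex.normSq_apply, Complex.add_re, Complex.add_im, Complex.sub_re,
    Complex.sub_im, Complex.mul_re, Complex.mul_im, Complex.neg_re, Complex.neg_im,
    Complex.I_re, Complex.I_im, Complex.ofReal_re, Complex.ofReal_im,
    Complex.inv_re, Complex.inv_im, Complex.normSq_ofNat,
    Complex.ofReal_ofNat, Complex.re_ofNat, Complex.im_ofNat]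
  ring_nf
  nlinarith [h, sq_nonneg x, sq_nonneg y]

lemma SWAPpow_eq_Upw (α : ℝ) :
    SWAPpow α = Upw (Real.cos (Real.pi * α)) (Real.sin (Real.pi * α)) := by
  unfold SWAPpow Upw
  rw [show Complex.I * (Real.pi : ℂ) * (α : ℂ) = ((Real.pi * α : ℝ) : ℂ) * Complex.I by
    push_cast; ring, Complex.exp_mul_I]
  push_cast
  norm_num [Complex.ofReal_cos, Complex.ofReal_sin]

/-- For the partial SWAP family of complementary qubit channels
E_α = tr_B ∘ V_α, Ē_α = tr_A ∘ V_α with V_α(ρ) = SWAP^α(ρ ⊗ |0⟩⟨0|)(SWAP^α)†, the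
unitarities satisfy u(E_α) + u(Ē_α) = 1 − 2s(1−s)/3 where s = sin²(πα/2); consequently,
along this family, ū = 3 + u − 2√(1 + 3u). -/
theorem swap_alpha_unitarity_sum (α : ℝ) (h0 : 0 ≤ α) (h1 : α ≤ 1) :
    uQ (fun ρ => trB (SWAPpow α * (ρ ⊗ₖ !![(1 : ℂ), 0; 0, 0]) * (SWAPpow α)ᴴ))
      + uQ (fun ρ => trA (SWAPpow α * (ρ ⊗ₖ !![(1 : ℂ), 0; 0, 0]) * (SWAPpow α)ᴴ))
      = 1 - 2 * Real.sin (Real.pi * α / 2) ^ 2 * (1 - Real.sin (Real.pi * α / 2) ^ 2) / 3 ∧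
    uQ (fun ρ => trA (SWAPpow α * (ρ ⊗ₖ !![(1 : ℂ), 0; 0, 0]) * (SWAPpow α)ᴴ))
      = 3 + uQ (fun ρ => trB (SWAPpow α * (ρ ⊗ₖ !![(1 : ℂ), 0; 0, 0]) * (SWAPpow α)ᴴ))
        - 2 * Real.sqrt (1 + 3 *
            uQ (fun ρ => trB (SWAPpow α * (ρ ⊗ₖ !![(1 : ℂ), 0; 0, 0]) * (SWAPpow α)ᴴ))) := by
  set x := Real.cos (Real.pi * α) with hx
  set y := Real.sin (Real.pi * α) with hy
  have hxy : x ^ 2 + y ^ 2 = 1 := by rw [hx, hy]; rw [add_comm]; exact Real.sin_sq_add_cos_sq _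
  rw [SWAPpow_eq_Upw, ← hx, ← hy, uQ_trB x y hxy, uQ_trA x y hxy]
  have hs : Real.sin (Real.pi * α / 2) ^ 2 = 1 / 2 - x / 2 := by
    rw [hx, Real.sin_sq_eq_half_sub, show 2 * (Real.pi * α / 2) = Real.pi * α by ring]
  have hxle : -1 ≤ x := Real.neg_one_le_cos _
  have hsq : Real.sqrt (1 + 3 * ((1 + x) * (5 + x) / 12)) = (3 + x) / 2 := by
    rw [show (1:ℝ) + 3 * ((1 + x) * (5 + x) / 12) = ((3 + x) / 2) ^ 2 by ring]
    exact Real.sqrt_sq (by linarith)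
  constructor
  · rw [hs]; ring
  · rw [hsq]; ring
end

section
/- Define V_α(ρ) = U^α (ρ ⊗ |0⟩⟨0|)(U^α)† with U = CNOT (control on first qubit) and U^α = |0⟩⟨0| ⊗ I + ((1+e^{iπα})/2)|1⟩⟨1| ⊗ I + ((1−e^{iπα})/2)|1⟩⟨1| ⊗ X. Then with s = sin²(πα/2), u(tr_B ∘ V_α) = 1 − 2s/3 and u(tr_A ∘ V_α) = s/3; in particular their sum is 1 − s/3. -/
open Matrix BigOperators Kronecker

/-- The fractional CNOT (control on the first qubit):
U^α = |0⟩⟨0| ⊗ I + ((1+e^{iπα})/2)|1⟩⟨1| ⊗ I + ((1−e^{iπα})/2)|1⟩⟨1| ⊗ X. -/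
noncomputable def CNOTpow (α : ℝ) : Matrix (Fin 2 × Fin 2) (Fin 2 × Fin 2) ℂ :=
  (!![(1 : ℂ), 0; 0, 0]) ⊗ₖ (1 : Matrix (Fin 2) (Fin 2) ℂ)
    + ((1 + Complex.exp (Complex.I * Real.pi * α)) / 2) •
        ((!![(0 : ℂ), 0; 0, 1]) ⊗ₖ (1 : Matrix (Fin 2) (Fin 2) ℂ))
    + ((1 - Complex.exp (Complex.I * Real.pi * α)) / 2) •
        ((!![(0 : ℂ), 0; 0, 1]) ⊗ₖ (!![(0 : ℂ), 1; 1, 0]))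

set_option maxHeartbeats 2000000 in
lemma uQ_trB_aux (α : ℝ) :
    uQ (fun ρ => trB (CNOTpow α * (ρ ⊗ₖ !![(1 : ℂ), 0; 0, 0]) * (CNOTpow α)ᴴ))
      = 1 - 2 * Real.sin (Real.pi * α / 2) ^ 2 / 3 := by
  have he : Complex.exp (Complex.I * Real.pi * α)
      = Real.cos (Real.pi*α) + Real.sin (Real.pi*α) * Complex.I := by
    rw [show (Complex.I * Real.pi * α : ℂ) = ((Real.pi*α : ℝ):ℂ) * Complex.I by push_cast; ring,
      Complex.exp_mul_I]
    norm_cast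
  have hs : Real.sin (Real.pi * α / 2) ^ 2 = (1 - Real.cos (Real.pi*α)) / 2 := by
    have h := Real.sin_sq_eq_half_sub (Real.pi*α/2)
    rw [show 2*(Real.pi*α/2) = Real.pi*α by ring] at h
    linarith
  have hsc : Real.sin (Real.pi*α) ^ 2 = 1 - Real.cos (Real.pi*α) ^ 2 := by
    nlinarith [Real.sin_sq_add_cos_sq (Real.pi*α)]
  set c := Real.cos (Real.pi*α)
  set s := Real.sin (Real.pi*α)
  simp only [uQ, trB, CNOTpow, PauliT, he, Fin.sum_univ_three, Fin.sum_univ_two,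
    Fintype.sum_prod_type,
    Matrix.mul_apply, Matrix.trace, Matrix.diag, Matrix.kroneckerMap_apply,
    Matrix.conjTranspose_apply, Matrix.add_apply, Matrix.smul_apply, Matrix.one_apply,
    Matrix.of_apply, Matrix.cons_val', Matrix.cons_val_zero, Matrix.cons_val_one,
    Matrix.head_cons, Matrix.head_fin_const, Matrix.empty_val', Matrix.cons_val_fin_one,
    smul_eq_mul, star_add, star_mul', star_div₀, star_one, star_sub, RCLike.star_def,
    map_add, _root_.map_mul, map_sub, _root_.map_one, map_div₀, Complex.conj_ofReal,
    Complex.conj_I, map_ofNat, star_zero, map_zero]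
  rw [hs]
  simp only [Complex.normSq_mul, Complex.normSq_inv, Complex.normSq_apply, Complex.add_re,
    Complex.add_im, Complex.mul_re, Complex.mul_im, Complex.sub_re, Complex.sub_im,
    Complex.div_re, Complex.div_im, Complex.ofReal_re, Complex.ofReal_im, Complex.I_re,
    Complex.I_im, Complex.one_re, Complex.one_im, Complex.zero_re, Complex.zero_im,
    Complex.neg_re, Complex.neg_im]
  norm_num
  ring_nf
  nlinarith [hsc]

set_option maxHeartbeats 2000000 in
lemma uQ_trA_aux (α : ℝ) :
    uQ (fun ρ => trA (CNOTpow α * (ρ ⊗ₖ !![(1 : ℂ), 0; 0, 0]) * (CNOTpow α)ᴴ))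
      = Real.sin (Real.pi * α / 2) ^ 2 / 3 := by
  have he : Complex.exp (Complex.I * Real.pi * α)
      = Real.cos (Real.pi*α) + Real.sin (Real.pi*α) * Complex.I := by
    rw [show (Complex.I * Real.pi * α : ℂ) = ((Real.pi*α : ℝ):ℂ) * Complex.I by push_cast; ring,
      Complex.exp_mul_I]
    norm_cast
  have hs : Real.sin (Real.pi * α / 2) ^ 2 = (1 - Real.cos (Real.pi*α)) / 2 := by
    have h := Real.sin_sq_eq_half_sub (Real.pi*α/2)
    rw [show 2*(Real.pi*α/2) = Real.pi*α by ring] at h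
    linarith
  have hsc : Real.sin (Real.pi*α) ^ 2 = 1 - Real.cos (Real.pi*α) ^ 2 := by
    nlinarith [Real.sin_sq_add_cos_sq (Real.pi*α)]
  set c := Real.cos (Real.pi*α)
  set s := Real.sin (Real.pi*α)
  simp only [uQ, trA, CNOTpow, PauliT, he, Fin.sum_univ_three, Fin.sum_univ_two,
    Fintype.sum_prod_type,
    Matrix.mul_apply, Matrix.trace, Matrix.diag, Matrix.kroneckerMap_apply,
    Matrix.conjTranspose_apply, Matrix.add_apply, Matrix.smul_apply, Matrix.one_apply,
    Matrix.of_apply, Matrix.cons_val', Matrix.cons_val_zero, Matrix.cons_val_one,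
    Matrix.head_cons, Matrix.head_fin_const, Matrix.empty_val', Matrix.cons_val_fin_one,
    smul_eq_mul, star_add, star_mul', star_div₀, star_one, star_sub, RCLike.star_def,
    map_add, _root_.map_mul, map_sub, _root_.map_one, map_div₀, Complex.conj_ofReal,
    Complex.conj_I, map_ofNat, star_zero, map_zero]
  rw [hs]
  simp only [Complex.normSq_mul, Complex.normSq_inv, Complex.normSq_apply, Complex.add_re,
    Complex.add_im, Complex.mul_re, Complex.mul_im, Complex.sub_re, Complex.sub_im,
    Complex.div_re, Complex.div_im, Complex.ofReal_re, Complex.ofReal_im, Complex.I_re,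
    Complex.I_im, Complex.one_re, Complex.one_im, Complex.zero_re, Complex.zero_im,
    Complex.neg_re, Complex.neg_im]
  norm_num
  ring_nf
  nlinarith [hsc]
/-- For V_α(ρ) = CNOT^α (ρ ⊗ |0⟩⟨0|)(CNOT^α)†, with s = sin²(πα/2),
u(tr_B ∘ V_α) = 1 − 2s/3 and u(tr_A ∘ V_α) = s/3; in particular their sum is 1 − s/3. -/
theorem cnot_alpha_marginal_unitarities (α : ℝ) (h0 : 0 ≤ α) (h1 : α ≤ 1) :
    uQ (fun ρ => trB (CNOTpow α * (ρ ⊗ₖ !![(1 : ℂ), 0; 0, 0]) * (CNOTpow α)ᴴ))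
      = 1 - 2 * Real.sin (Real.pi * α / 2) ^ 2 / 3 ∧
    uQ (fun ρ => trA (CNOTpow α * (ρ ⊗ₖ !![(1 : ℂ), 0; 0, 0]) * (CNOTpow α)ᴴ))
      = Real.sin (Real.pi * α / 2) ^ 2 / 3 ∧
    uQ (fun ρ => trB (CNOTpow α * (ρ ⊗ₖ !![(1 : ℂ), 0; 0, 0]) * (CNOTpow α)ᴴ))
      + uQ (fun ρ => trA (CNOTpow α * (ρ ⊗ₖ !![(1 : ℂ), 0; 0, 0]) * (CNOTpow α)ᴴ))
      = 1 - Real.sin (Real.pi * α / 2) ^ 2 / 3 := by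
  exact ⟨uQ_trB_aux α, uQ_trA_aux α, by rw [uQ_trB_aux α, uQ_trA_aux α]; ring⟩
end

section
/- Let V: H_X → H_A ⊗ H_B be an isometry between systems of equal dimension d_X = d_A = d_B = d, with marginals E = tr_B ∘ V(·)V† and Ē = tr_A ∘ V(·)V†. If Ē is completely depolarizing (Ē(ρ) = σ fixed for all ρ), then E is a unitary channel, i.e. there exist unitaries W_A, W_B with V = (W_A ⊗ W_B)(· ⊗ |ψ⟩) for some pure state |ψ⟩, so that E(ρ) = W_A ρ W_A†. -/
open Matrix BigOperators
open scoped ComplexOrder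

noncomputable def Phi (d : ℕ) (V : Matrix (Fin d × Fin d) (Fin d) ℂ) (x x' b b' : Fin d) : ℂ :=
  ∑ a, V (a, b) x * star (V (a, b') x')

lemma sandwich {m d : Type*} [Fintype m] [Fintype d] (M : Matrix m d ℂ)
    (ρ : Matrix d d ℂ) (p q : m) :
    (M * ρ * Mᴴ) p q = ∑ x, ∑ x', M p x * ρ x x' * star (M q x') := by
  calc (M * ρ * Mᴴ) p q = ∑ x', (∑ x, M p x * ρ x x') * star (M q x') := by
        simp [Matrix.mul_apply, Matrix.conjTranspose_apply]
      _ = ∑ x', ∑ x, M p x * ρ x x' * star (M q x') := by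
        simp [Finset.sum_mul]
      _ = ∑ x, ∑ x', M p x * ρ x x' * star (M q x') := Finset.sum_comm

lemma htrA {d : ℕ} (V : Matrix (Fin d × Fin d) (Fin d) ℂ)
    (ρ : Matrix (Fin d) (Fin d) ℂ) (b b' : Fin d) :
    trA (V * ρ * Vᴴ) b b' = ∑ x, ∑ x', ρ x x' * Phi d V x x' b b' := by
  calc trA (V * ρ * Vᴴ) b b'
      = ∑ a, ∑ x, ∑ x', V (a, b) x * ρ x x' * star (V (a, b') x') :=
        Finset.sum_congr rfl fun a _ => sandwich V ρ (a, b) (a, b')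
    _ = ∑ x, ∑ a, ∑ x', V (a, b) x * ρ x x' * star (V (a, b') x') := Finset.sum_comm
    _ = ∑ x, ∑ x', ∑ a, V (a, b) x * ρ x x' * star (V (a, b') x') :=
        Finset.sum_congr rfl fun _ _ => Finset.sum_comm
    _ = ∑ x, ∑ x', ρ x x' * Phi d V x x' b b' := by
        refine Finset.sum_congr rfl fun x _ => Finset.sum_congr rfl fun x' _ => ?_
        rw [Phi, Finset.mul_sum]
        exact Finset.sum_congr rfl fun a _ => by ring

lemma sum_pair_support {d : ℕ} {x x' : Fin d} (h : x ≠ x') (f : Fin d → ℂ)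
    (hf : ∀ y, y ≠ x → y ≠ x' → f y = 0) : ∑ y, f y = f x + f x' := by
  rw [← Finset.sum_pair h]
  refine (Finset.sum_subset (Finset.subset_univ _) fun y _ hy => ?_).symm
  simp only [Finset.mem_insert, Finset.mem_singleton] at hy
  push_neg at hy
  exact hf y hy.1 hy.2

lemma pure_psd {d : ℕ} (v : Fin d → ℂ) : (vecMulVec v (star v)).PosSemidef := by
  have h : vecMulVec v (star v) = (replicateCol (Fin 1) v) * (replicateCol (Fin 1) v)ᴴ := by
    ext a b; simp [vecMulVec_apply, mul_apply, replicateCol_apply, conjTranspose_apply]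
  rw [h]; exact posSemidef_self_mul_conjTranspose _

lemma half_pure_psd {d : ℕ} (u : Fin d → ℂ) :
    ((1/2 : ℂ) • vecMulVec u (star u)).PosSemidef := by
  have h : (1/2:ℂ) • vecMulVec u (star u) =
      (Matrix.of fun (_ : Fin 2) y => (1/2:ℂ) * star (u y))ᴴ *
      (Matrix.of fun (_ : Fin 2) y => (1/2:ℂ) * star (u y)) := by
    ext x y
    simp [Matrix.mul_apply, conjTranspose_apply, vecMulVec_apply, Fin.sum_univ_two,
      Matrix.smul_apply, smul_eq_mul]
    ring
  rw [h]; exact posSemidef_conjTranspose_mul_self _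

lemma key {d : ℕ} (V : Matrix (Fin d × Fin d) (Fin d) ℂ)
    (σ : Matrix (Fin d) (Fin d) ℂ)
    (hdep : ∀ ρ : Matrix (Fin d) (Fin d) ℂ, ρ.PosSemidef → ρ.trace = 1 →
      trA (V * ρ * Vᴴ) = σ)
    (x x' b b' : Fin d) :
    Phi d V x x' b b' = if x = x' then σ b b' else 0 := by
  classical
  have hform : ∀ ρ : Matrix (Fin d) (Fin d) ℂ, ρ.PosSemidef → ρ.trace = 1 →
      ∀ b b', ∑ x0, ∑ x0', ρ x0 x0' * Phi d V x0 x0' b b' = σ b b' := by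
    intro ρ h1 h2 b b'
    rw [← htrA, hdep ρ h1 h2]
  have hdiag : ∀ y b b', Phi d V y y b b' = σ b b' := by
    intro y b b'
    have htr : (vecMulVec (fun z => if z = y then (1:ℂ) else 0)
        (star (fun z => if z = y then (1:ℂ) else 0))).trace = 1 := by
      simp [Matrix.trace, Matrix.diag, vecMulVec_apply, Pi.star_apply, apply_ite (star : ℂ → ℂ)]
    have h := hform _ (pure_psd _) htr b b'
    simp only [vecMulVec_apply, Pi.star_apply, apply_ite (star : ℂ → ℂ), star_one, star_zero,
      ite_mul, mul_ite, one_mul, zero_mul, mul_zero, mul_one,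
      Finset.sum_ite_eq', Finset.mem_univ, if_true] at h
    exact h.symm ▸ rfl
  by_cases hxx : x = x'
  · subst hxx; simp [hdiag]
  · simp only [if_neg hxx]
    have hA := hdiag x b b'
    have hD := hdiag x' b b'
    have collapse : ∀ ρ : Matrix (Fin d) (Fin d) ℂ,
        (∀ y z, y ≠ x → y ≠ x' → ρ y z = 0) → (∀ y z, z ≠ x → z ≠ x' → ρ y z = 0) →
        ∑ x0, ∑ x0', ρ x0 x0' * Phi d V x0 x0' b b' =
          ρ x x * Phi d V x x b b' + ρ x x' * Phi d V x x' b b' +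
          (ρ x' x * Phi d V x' x b b' + ρ x' x' * Phi d V x' x' b b') := by
      intro ρ hrow hcol
      rw [sum_pair_support hxx _ (fun y h1 h2 => Finset.sum_eq_zero fun z _ => by
        rw [hrow y z h1 h2, zero_mul])]
      rw [sum_pair_support hxx _ (fun z h1 h2 => by rw [hcol x z h1 h2, zero_mul]),
          sum_pair_support hxx _ (fun z h1 h2 => by rw [hcol x' z h1 h2, zero_mul])]
    set u1 : Fin d → ℂ := fun z => if z = x then 1 else if z = x' then 1 else 0 with hu1
    have htr1 : ((1/2:ℂ) • vecMulVec u1 (star u1)).trace = 1 := by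
      rw [Matrix.trace]
      rw [show ∑ z, ((1/2:ℂ) • vecMulVec u1 (star u1)).diag z
          = ∑ z, (1/2:ℂ) * (u1 z * star (u1 z)) from rfl]
      rw [sum_pair_support hxx _ (fun y h1 h2 => by
        simp [hu1, if_neg h1, if_neg h2])]
      simp [hu1, if_neg hxx, if_neg (Ne.symm hxx)]
      norm_num
    have h1 := hform _ (half_pure_psd u1) htr1 b b'
    have hrow1 : ∀ y z, y ≠ x → y ≠ x' → ((1/2:ℂ) • vecMulVec u1 (star u1)) y z = 0 := by
      intro y z h1 h2
      simp [Matrix.smul_apply, vecMulVec_apply, hu1, if_neg h1, if_neg h2]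
    have hcol1 : ∀ y z, z ≠ x → z ≠ x' → ((1/2:ℂ) • vecMulVec u1 (star u1)) y z = 0 := by
      intro y z h1 h2
      simp [Matrix.smul_apply, vecMulVec_apply, hu1, if_neg h1, if_neg h2]
    rw [collapse _ hrow1 hcol1] at h1
    simp only [Matrix.smul_apply, vecMulVec_apply, hu1, eq_self_iff_true, if_true, if_neg hxx,
      if_neg (Ne.symm hxx), Pi.star_apply, star_one, smul_eq_mul, one_mul, mul_one] at h1
    have e1 : Phi d V x x' b b' + Phi d V x' x b b' = 0 := by
      linear_combination (2:ℂ) * h1 - hA - hD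
    set u2 : Fin d → ℂ := fun z => if z = x then 1 else if z = x' then Complex.I else 0 with hu2
    have htr2 : ((1/2:ℂ) • vecMulVec u2 (star u2)).trace = 1 := by
      rw [Matrix.trace]
      rw [show ∑ z, ((1/2:ℂ) • vecMulVec u2 (star u2)).diag z
          = ∑ z, (1/2:ℂ) * (u2 z * star (u2 z)) from rfl]
      rw [sum_pair_support hxx _ (fun y h1 h2 => by
        simp [hu2, if_neg h1, if_neg h2])]
      simp [hu2, if_neg hxx, if_neg (Ne.symm hxx), Complex.star_def, Complex.conj_I]
      norm_num
    have h2 := hform _ (half_pure_psd u2) htr2 b b'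
    have hrow2 : ∀ y z, y ≠ x → y ≠ x' → ((1/2:ℂ) • vecMulVec u2 (star u2)) y z = 0 := by
      intro y z h1 h2
      simp [Matrix.smul_apply, vecMulVec_apply, hu2, if_neg h1, if_neg h2]
    have hcol2 : ∀ y z, z ≠ x → z ≠ x' → ((1/2:ℂ) • vecMulVec u2 (star u2)) y z = 0 := by
      intro y z h1 h2
      simp [Matrix.smul_apply, vecMulVec_apply, hu2, if_neg h1, if_neg h2]
    rw [collapse _ hrow2 hcol2] at h2
    simp only [Matrix.smul_apply, vecMulVec_apply, hu2, eq_self_iff_true, if_true, if_neg hxx,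
      if_neg (Ne.symm hxx), Pi.star_apply, star_one, smul_eq_mul, one_mul, mul_one,
      Complex.star_def, Complex.conj_I, _root_.map_one] at h2
    have hI : Complex.I * Complex.I = -1 := Complex.I_mul_I
    have hIB : Complex.I * Phi d V x x' b b' = 0 := by
      linear_combination (-1:ℂ) * h2 + hA/2 + hD/2 + (Complex.I/2) * e1
        + (-(Phi d V x' x' b b')/2) * hI
    rcases mul_eq_zero.mp hIB with h | h
    · exact absurd h Complex.I_ne_zero
    · exact h

/-- no-hiding, equal dimensions: Let V : H_X → H_A ⊗ H_B be an isometry with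
d_X = d_A = d_B = d and marginals E = tr_B ∘ V(·)V†, Ē = tr_A ∘ V(·)V†.  If Ē is completely
depolarizing (Ē(ρ) = σ for all states ρ), then E is a unitary channel: there exist unitaries
W_A, W_B and a unit vector |ψ⟩ with V = (W_A ⊗ W_B)(· ⊗ |ψ⟩), so that E(ρ) = W_A ρ W_A†. -/
theorem no_hiding_equal_dims (d : ℕ) (hd : 0 < d)
    (V : Matrix (Fin d × Fin d) (Fin d) ℂ) (hV : Vᴴ * V = 1)
    (σ : Matrix (Fin d) (Fin d) ℂ)
    (hdep : ∀ ρ : Matrix (Fin d) (Fin d) ℂ, ρ.PosSemidef → ρ.trace = 1 →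
      trA (V * ρ * Vᴴ) = σ) :
    ∃ (WA WB : Matrix (Fin d) (Fin d) ℂ) (ψ : Fin d → ℂ),
      WA ∈ Matrix.unitaryGroup (Fin d) ℂ ∧ WB ∈ Matrix.unitaryGroup (Fin d) ℂ ∧
      (∑ b, Complex.normSq (ψ b)) = 1 ∧
      (∀ a b x, V (a, b) x = WA a x * (WB.mulVec ψ) b) ∧
      (∀ ρ : Matrix (Fin d) (Fin d) ℂ, trB (V * ρ * Vᴴ) = WA * ρ * WAᴴ) := by
  classical
  have hkey := key V σ hdep
  set x₀ : Fin d := ⟨0, hd⟩ with hx₀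
  -- each column of V is normalized, per Phi
  have hVxx : ∀ x : Fin d, ∑ b, Phi d V x x b b = 1 := by
    intro x
    have h := congrFun (congrFun hV x) x
    rw [Matrix.mul_apply, Matrix.one_apply_eq] at h
    rw [← h, Fintype.sum_prod_type]
    rw [Finset.sum_comm]
    refine Finset.sum_congr rfl fun b _ => Finset.sum_congr rfl fun a _ => ?_
    rw [Matrix.conjTranspose_apply, mul_comm]
  have htrσ : ∑ b, σ b b = 1 := by
    calc ∑ b, σ b b = ∑ b, Phi d V x₀ x₀ b b := by
          refine Finset.sum_congr rfl fun b _ => ?_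
          rw [hkey x₀ x₀ b b, if_pos rfl]
      _ = 1 := hVxx x₀
  obtain ⟨b₀, hb₀⟩ : ∃ b₀, σ b₀ b₀ ≠ 0 := by
    by_contra h
    push_neg at h
    rw [Finset.sum_eq_zero (fun b _ => h b)] at htrσ
    exact one_ne_zero htrσ.symm
  set r : ℝ := ∑ a, Complex.normSq (V (a, b₀) x₀) with hr
  have hσr : σ b₀ b₀ = (r : ℂ) := by
    have h := hkey x₀ x₀ b₀ b₀
    rw [if_pos rfl] at h
    rw [← h, Phi, hr]
    push_cast
    refine Finset.sum_congr rfl fun a _ => ?_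
    rw [Complex.star_def, Complex.mul_conj]
  have hrpos : 0 < r := by
    have hge : 0 ≤ r := Finset.sum_nonneg fun a _ => Complex.normSq_nonneg (V (a, b₀) x₀)
    rcases hge.lt_or_eq with h | h
    · exact h
    · exact absurd (by rw [hσr]; norm_cast; exact h.symm) hb₀
  have hrC : (r : ℂ) ≠ 0 := by exact_mod_cast hrpos.ne'
  set s : ℝ := Real.sqrt r with hs
  have hspos : (0:ℝ) < s := Real.sqrt_pos.mpr hrpos
  have hsC : (s : ℂ) ≠ 0 := by exact_mod_cast hspos.ne'
  have hss : (s:ℂ) * (s:ℂ) = (r:ℂ) := by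
    rw [← Complex.ofReal_mul, Real.mul_self_sqrt hrpos.le]
  set U₀ : Matrix (Fin d) (Fin d) ℂ := Matrix.of (fun a y => V (a, b₀) y) with hU₀
  have hUU : U₀ᴴ * U₀ = (r:ℂ) • (1 : Matrix (Fin d) (Fin d) ℂ) := by
    ext y y'
    rw [Matrix.mul_apply]
    have hsum : (∑ a, U₀ᴴ y a * U₀ a y') = star (Phi d V y y' b₀ b₀) := by
      rw [Phi, star_sum]
      refine Finset.sum_congr rfl fun a _ => ?_
      simp only [Matrix.conjTranspose_apply, hU₀, Matrix.of_apply, star_mul', star_star]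
    rw [hsum, hkey y y' b₀ b₀]
    by_cases h : y = y'
    · subst h
      simp [hσr, Matrix.smul_apply, Matrix.one_apply_eq, Complex.star_def, Complex.conj_ofReal]
    · simp [if_neg h, Matrix.smul_apply, Matrix.one_apply_ne h]
  have hdetU : IsUnit U₀ᴴ.det := by
    have hdet : U₀ᴴ.det * U₀.det = (r:ℂ)^d := by
      rw [← det_mul, hUU, det_smul, det_one, Fintype.card_fin, mul_one]
    refine isUnit_iff_ne_zero.mpr fun h => ?_
    rw [h, zero_mul] at hdet
    exact pow_ne_zero d hrC hdet.symm
  have hprop : ∀ x b a, V (a, b) x = (σ b b₀ / (r:ℂ)) * V (a, b₀) x := by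
    intro x b
    set w : Fin d → ℂ := fun a => V (a, b) x - (σ b b₀ / (r:ℂ)) * V (a, b₀) x with hw
    have hmul : U₀ᴴ *ᵥ w = 0 := by
      ext y
      show (∑ a, U₀ᴴ y a * w a) = 0
      have hexp : (∑ a, U₀ᴴ y a * w a)
          = Phi d V x y b b₀ - (σ b b₀ / (r:ℂ)) * Phi d V x y b₀ b₀ := by
        rw [Phi, Phi, Finset.mul_sum, ← Finset.sum_sub_distrib]
        refine Finset.sum_congr rfl fun a _ => ?_
        simp only [Matrix.conjTranspose_apply, hU₀, Matrix.of_apply, hw]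
        ring
      rw [hexp, hkey, hkey]
      by_cases h : x = y
      · subst h
        rw [if_pos rfl, if_pos rfl, hσr]
        field_simp
        ring
      · simp [if_neg h]
    have hw0 : w = 0 := by
      have h1 : U₀ᴴ⁻¹ * U₀ᴴ = 1 := nonsing_inv_mul _ hdetU
      calc w = (U₀ᴴ⁻¹ * U₀ᴴ) *ᵥ w := by rw [h1, one_mulVec]
        _ = U₀ᴴ⁻¹ *ᵥ (U₀ᴴ *ᵥ w) := by rw [← mulVec_mulVec]
        _ = 0 := by rw [hmul, mulVec_zero]
    intro a
    have h := congrFun hw0 a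
    rw [hw] at h
    exact sub_eq_zero.mp h
  -- the objects
  set WA : Matrix (Fin d) (Fin d) ℂ := Matrix.of (fun a x => V (a, b₀) x / (s:ℂ)) with hWA
  set ψ : Fin d → ℂ := fun b => σ b b₀ / (s:ℂ) with hψ
  -- sum of |σ b b₀|² = r
  have hσbb : ∀ b, σ b b = (Complex.normSq (σ b b₀) : ℂ) / (r:ℂ) := by
    intro b
    have h := hkey x₀ x₀ b b
    rw [if_pos rfl] at h
    have hPhi : Phi d V x₀ x₀ b b
        = (σ b b₀ * star (σ b b₀)) / ((r:ℂ) * (r:ℂ)) * Phi d V x₀ x₀ b₀ b₀ := by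
      rw [Phi, Phi, Finset.mul_sum]
      refine Finset.sum_congr rfl fun a _ => ?_
      rw [hprop x₀ b a, star_mul']
      have : star ((r:ℂ)) = (r:ℂ) := by rw [Complex.star_def, Complex.conj_ofReal]
      rw [star_div₀, this]
      field_simp
    have hPhib₀ : Phi d V x₀ x₀ b₀ b₀ = (r:ℂ) := by
      have h2 := hkey x₀ x₀ b₀ b₀
      rw [if_pos rfl] at h2
      rw [h2, hσr]
    rw [← h, hPhi, hPhib₀, show σ b b₀ * star (σ b b₀) = (Complex.normSq (σ b b₀) : ℂ) by
      rw [Complex.star_def, Complex.mul_conj]]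
    field_simp
  have hsumns : (∑ b, (Complex.normSq (σ b b₀) : ℂ)) = (r:ℂ) := by
    have h : ∑ b, (Complex.normSq (σ b b₀) : ℂ) / (r:ℂ) = 1 := by
      rw [← Finset.sum_congr rfl fun b _ => hσbb b]
      exact htrσ
    rw [← Finset.sum_div] at h
    field_simp at h
    exact h
  have hψnorm : (∑ b, Complex.normSq (ψ b)) = 1 := by
    have h : ∀ b, Complex.normSq (ψ b) = Complex.normSq (σ b b₀) / r := by
      intro b
      simp only [hψ]
      rw [Complex.normSq_div, Complex.normSq_ofReal, hs, Real.mul_self_sqrt hrpos.le]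
    rw [Finset.sum_congr rfl fun b _ => h b, ← Finset.sum_div]
    have : (∑ b, Complex.normSq (σ b b₀)) = r := by
      have := hsumns
      push_cast at this
      exact_mod_cast this
    rw [this]
    field_simp
  have hfac : ∀ a b x, V (a, b) x = WA a x * ψ b := by
    intro a b x
    rw [hWA, hψ, hprop x b a]
    show σ b b₀ / ↑r * V (a, b₀) x = V (a, b₀) x / ↑s * (σ b b₀ / ↑s)
    field_simp
    rw [← hss]
    ring
  have hψs : (∑ b, ψ b * star (ψ b)) = 1 := by
    have : ∀ b, ψ b * star (ψ b) = (Complex.normSq (ψ b) : ℂ) := fun b => by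
      rw [Complex.star_def, Complex.mul_conj]
    rw [Finset.sum_congr rfl fun b _ => this b, ← Complex.ofReal_sum, hψnorm]
    norm_num
  refine ⟨WA, 1, ψ, ?_, ?_, hψnorm, ?_, ?_⟩
  · -- WA unitary
    rw [Matrix.mem_unitaryGroup_iff']
    have hWAU : WA = ((s:ℂ)⁻¹) • U₀ := by
      ext a x
      rw [hWA, hU₀]
      show V (a, b₀) x / ↑s = (↑s)⁻¹ * V (a, b₀) x
      ring
    rw [hWAU]
    rw [show star (((s:ℂ)⁻¹) • U₀) = ((s:ℂ)⁻¹) • U₀ᴴ by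
      rw [Matrix.star_eq_conjTranspose, Matrix.conjTranspose_smul]
      congr 1
      rw [star_inv₀, Complex.star_def, Complex.conj_ofReal]]
    rw [Matrix.smul_mul, Matrix.mul_smul, hUU, smul_smul, smul_smul]
    have hone : ((s:ℂ))⁻¹ * ((s:ℂ))⁻¹ * (r:ℂ) = 1 := by
      rw [← hss]; field_simp
    rw [hone, one_smul]
  · exact one_mem _
  · intro a b x
    rw [Matrix.one_mulVec]
    exact hfac a b x
  · intro ρ
    ext a a'
    show (∑ b, (V * ρ * Vᴴ) (a, b) (a', b)) = (WA * ρ * WAᴴ) a a'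
    calc (∑ b, (V * ρ * Vᴴ) (a, b) (a', b))
        = ∑ b, ∑ x, ∑ x', V (a, b) x * ρ x x' * star (V (a', b) x') :=
          Finset.sum_congr rfl fun b _ => sandwich V ρ (a, b) (a', b)
      _ = ∑ x, ∑ b, ∑ x', V (a, b) x * ρ x x' * star (V (a', b) x') := Finset.sum_comm
      _ = ∑ x, ∑ x', ∑ b, V (a, b) x * ρ x x' * star (V (a', b) x') :=
          Finset.sum_congr rfl fun _ _ => Finset.sum_comm
      _ = ∑ x, ∑ x', WA a x * ρ x x' * star (WA a' x') := by
          refine Finset.sum_congr rfl fun x _ => Finset.sum_congr rfl fun x' _ => ?_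
          calc (∑ b, V (a, b) x * ρ x x' * star (V (a', b) x'))
              = ∑ b, WA a x * ρ x x' * star (WA a' x') * (ψ b * star (ψ b)) := by
                refine Finset.sum_congr rfl fun b _ => ?_
                rw [hfac a b x, hfac a' b x', star_mul']
                ring
            _ = WA a x * ρ x x' * star (WA a' x') * (∑ b, ψ b * star (ψ b)) := by
                rw [Finset.mul_sum]
            _ = WA a x * ρ x x' * star (WA a' x') := by rw [hψs, mul_one]
      _ = (WA * ρ * WAᴴ) a a' := (sandwich WA ρ a a').symm
end
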